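/- arXiv:2209.12835 — 3 statements merged into one kernel-verified Lean document; each statement's English description precedes it below -/
import Mathlib

section
/- Let X be a metric space, P a Borel probability measure on X, and h : X → ℝ a Borel measurable function that is P-integrable, bounded below, and coercive, meaning that for every M > 0 there exists a compact set S ⊆ X with inf_{x ∈ X∖S} h(x) > M. Then the family {c·h : c > 0} P-dominates indicators: for every ε > 0 there exist a compact set S ⊆ X and a constant c > 0 such that c·h(x) − ∫ c·h dP ≥ 𝟙_{X∖S}(x) − ε for all x ∈ X. -/
open MeasureTheory Filter Topology

/-- **Coercive functions dominate indicators.** If `h` is `P`-integrable, bounded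
below, and coercive, then the family of its positive multiples `P`-dominates
indicators. -/
theorem coercive_dominates_indicators
    {X : Type*} [MetricSpace X] [MeasurableSpace X] [BorelSpace X]
    (P : Measure X) [IsProbabilityMeasure P]
    (h : X → ℝ) (hmeas : Measurable h) (hint : Integrable h P)
    (hbdd : ∃ B : ℝ, ∀ x, B ≤ h x)
    (hcoer : ∀ M : ℝ, 0 < M → ∃ S : Set X, IsCompact S ∧ ∀ x ∉ S, M < h x) :
    ∀ ε : ℝ, 0 < ε → ∃ (S : Set X) (c : ℝ), IsCompact S ∧ 0 < c ∧
      ∀ x, Set.indicator Sᶜ (fun _ => (1 : ℝ)) x - ε ≤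
        c * h x - ∫ y, c * h y ∂P := by
  intro ε hε
  obtain ⟨B, hB⟩ := hbdd
  set I : ℝ := ∫ y, h y ∂P with hI
  set c : ℝ := min (ε / (|B - I| + 1)) 1 with hc
  have habs : 0 < |B - I| + 1 := by positivity
  have hcpos : 0 < c := lt_min (by positivity) one_pos
  have hc1 : c ≤ ε / (|B - I| + 1) := min_le_left _ _
  set M : ℝ := max 1 (I + 1 / c) with hM
  obtain ⟨S, hScomp, hS⟩ := hcoer M (lt_max_iff.mpr (Or.inl one_pos))
  refine ⟨S, c, hScomp, hcpos, ?_⟩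
  have hintc : ∫ y, c * h y ∂P = c * I := by
    rw [hI, integral_const_mul]
  intro x
  rw [hintc]
  by_cases hx : x ∈ S
  · have : x ∉ Sᶜ := by simpa using hx
    rw [Set.indicator_of_notMem this]
    have h1 : c * B ≤ c * h x := by
      have := hB x
      nlinarith
    have h2 : c * |B - I| ≤ ε := by
      calc c * |B - I| ≤ (ε / (|B - I| + 1)) * |B - I| := by
            apply mul_le_mul_of_nonneg_right hc1 (abs_nonneg _)
        _ ≤ ε := by
            rw [div_mul_eq_mul_div, div_le_iff₀ habs]
            nlinarith [abs_nonneg (B - I)]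
    have h3 : -(B - I) ≤ |B - I| := neg_le_abs _
    nlinarith
  · have : x ∈ Sᶜ := hx
    rw [Set.indicator_of_mem this]
    have h1 : M < h x := hS x hx
    have h2 : I + 1 / c ≤ M := le_max_right _ _
    have h3 : c * (I + 1 / c) ≤ c * h x := by nlinarith
    have h4 : c * (I + 1 / c) = c * I + 1 := by
      field_simp
    nlinarith
end

section
/- Let s : ℝ^d → ℝ^d be continuous and suppose there exist u > 1/2 and r₀, r₁, r₂ > 0 with −⟨s(x), x⟩ − r₀ ‖s(x)‖₁ ≥ r₁ ‖x‖^{2u} − r₂ for all x ∈ ℝ^d (generalized dissipativity). Fix a > 0 and α ∈ (1−u, 1), and define g : ℝ^d → ℝ^d by g(x) := −(a² + ‖x‖²)^{α−1} x and h : ℝ^d → ℝ by h(x) := ⟨s(x), g(x)⟩ + ∑_{j=1}^d ∂_j g_j(x), i.e., h(x) = −⟨s(x), x⟩ (a² + ‖x‖²)^{α−1} − d·(a² + ‖x‖²)^{α−1} + 2(1−α) ‖x‖² (a² + ‖x‖²)^{α−2}. Then h is bounded below on ℝ^d and coercive: for every M > 0 there exists a compact set S ⊆ ℝ^d with inf_{x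 ∉ S} h(x) > M. -/
open MeasureTheory Filter Topology
open scoped RealInnerProductSpace

/-- **The IMQ Stein function is coercive and bounded below.** Under generalized
dissipativity of the score `s`, the Langevin Stein operator applied to
`g(x) = −(a² + ‖x‖²)^{α−1} x` yields a function `h` that is bounded below and
coercive. -/
theorem imq_stein_function_coercive {d : ℕ}
    (s : EuclideanSpace ℝ (Fin d) → EuclideanSpace ℝ (Fin d))
    (hs_cont : Continuous s)
    (u r₀ r₁ r₂ : ℝ) (hu : 1 / 2 < u)
    (hr₀ : 0 < r₀) (hr₁ : 0 < r₁) (hr₂ : 0 < r₂)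
    (hdis : ∀ x : EuclideanSpace ℝ (Fin d),
      r₁ * ‖x‖ ^ (2 * u) - r₂ ≤ -⟪s x, x⟫ - r₀ * ∑ i, |s x i|)
    (a α : ℝ) (ha : 0 < a) (hα₁ : 1 - u < α) (hα₂ : α < 1)
    (h : EuclideanSpace ℝ (Fin d) → ℝ)
    (hh : ∀ x : EuclideanSpace ℝ (Fin d),
      h x = -⟪s x, x⟫ * (a ^ 2 + ‖x‖ ^ 2) ^ (α - 1)
        - d * (a ^ 2 + ‖x‖ ^ 2) ^ (α - 1)
        + 2 * (1 - α) * ‖x‖ ^ 2 * (a ^ 2 + ‖x‖ ^ 2) ^ (α - 2)) :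
    (∃ B : ℝ, ∀ x, B ≤ h x) ∧
    (∀ M : ℝ, 0 < M → ∃ S : Set (EuclideanSpace ℝ (Fin d)),
      IsCompact S ∧ ∀ x ∉ S, M < h x) := by
  set C : ℝ := (r₂ + d) * (a ^ 2) ^ (α - 1) with hCdef
  -- pointwise lower bound
  have key : ∀ x : EuclideanSpace ℝ (Fin d),
      r₁ * ‖x‖ ^ (2 * u) * (a ^ 2 + ‖x‖ ^ 2) ^ (α - 1)
        - (r₂ + d) * (a ^ 2 + ‖x‖ ^ 2) ^ (α - 1) ≤ h x := by
    intro x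
    have hbase : (0 : ℝ) < a ^ 2 + ‖x‖ ^ 2 := by positivity
    have hP : 0 < (a ^ 2 + ‖x‖ ^ 2) ^ (α - 1) := Real.rpow_pos_of_pos hbase _
    have hQpos : 0 < (a ^ 2 + ‖x‖ ^ 2) ^ (α - 2) := Real.rpow_pos_of_pos hbase _
    have h1α : (0 : ℝ) < 1 - α := by linarith
    have hQ : 0 ≤ 2 * (1 - α) * ‖x‖ ^ 2 * (a ^ 2 + ‖x‖ ^ 2) ^ (α - 2) := by positivity
    have hsum : 0 ≤ r₀ * ∑ i, |s x i| := by positivity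
    have hsx : r₁ * ‖x‖ ^ (2 * u) - r₂ ≤ -⟪s x, x⟫ := by
      have := hdis x; linarith
    have hmul := mul_le_mul_of_nonneg_right hsx hP.le
    rw [hh x]
    nlinarith [hmul, hQ, hP.le]
  -- lower bound at large norm
  have key2 : ∀ x : EuclideanSpace ℝ (Fin d), max a 1 ≤ ‖x‖ →
      r₁ * 2 ^ (α - 1) * ‖x‖ ^ (2 * (u + α - 1)) - C ≤ h x := by
    intro x hx
    set t : ℝ := ‖x‖ with htdef
    have h1t : (1 : ℝ) ≤ t := le_trans (le_max_right a 1) hx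
    have hat : a ≤ t := le_trans (le_max_left a 1) hx
    have ht0 : (0 : ℝ) < t := by linarith
    have hbase : (0 : ℝ) < a ^ 2 + t ^ 2 := by positivity
    have hα0 : α - 1 ≤ 0 := by linarith
    -- P ≤ (a^2)^(α-1)
    have hPle : (a ^ 2 + t ^ 2) ^ (α - 1) ≤ (a ^ 2) ^ (α - 1) :=
      Real.rpow_le_rpow_of_nonpos (by positivity) (by nlinarith) hα0
    -- P ≥ 2^(α-1) * t^(2*(α-1))
    have h2t : a ^ 2 + t ^ 2 ≤ 2 * t ^ 2 := by nlinarith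
    have hPge : 2 ^ (α - 1) * t ^ (2 * (α - 1)) ≤ (a ^ 2 + t ^ 2) ^ (α - 1) := by
      have h1 : (2 * t ^ 2 : ℝ) ^ (α - 1) ≤ (a ^ 2 + t ^ 2) ^ (α - 1) :=
        Real.rpow_le_rpow_of_nonpos hbase h2t hα0
      have h2 : (2 * t ^ 2 : ℝ) ^ (α - 1)
          = 2 ^ (α - 1) * t ^ (2 * (α - 1)) := by
        rw [Real.mul_rpow (by norm_num) (by positivity)]
        congr 1
        rw [← Real.rpow_natCast t 2, ← Real.rpow_mul ht0.le]
        norm_num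
      linarith [h2 ▸ h1]
    have hP : 0 < (a ^ 2 + t ^ 2) ^ (α - 1) := Real.rpow_pos_of_pos hbase _
    have hA : 0 ≤ r₁ * t ^ (2 * u) := by positivity
    have e1 : r₁ * 2 ^ (α - 1) * t ^ (2 * (u + α - 1))
        = r₁ * t ^ (2 * u) * (2 ^ (α - 1) * t ^ (2 * (α - 1))) := by
      rw [mul_assoc, mul_mul_mul_comm, ← Real.rpow_add ht0]
      ring_nf
    have hfirst : r₁ * 2 ^ (α - 1) * t ^ (2 * (u + α - 1))
        ≤ r₁ * t ^ (2 * u) * (a ^ 2 + t ^ 2) ^ (α - 1) := by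
      rw [e1]
      exact mul_le_mul_of_nonneg_left hPge hA
    have hsecond : (r₂ + d) * (a ^ 2 + t ^ 2) ^ (α - 1) ≤ C := by
      rw [hCdef]
      have : (0 : ℝ) ≤ r₂ + d := by positivity
      exact mul_le_mul_of_nonneg_left hPle this
    have := key x
    simp only [← htdef] at this
    linarith
  -- the scalar comparison function tends to atTop
  have hε : (0 : ℝ) < 2 * (u + α - 1) := by linarith
  have hc : (0 : ℝ) < r₁ * 2 ^ (α - 1) := by positivity
  have hψ : Tendsto (fun t : ℝ => r₁ * 2 ^ (α - 1) * t ^ (2 * (u + α - 1)) - C)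
      atTop atTop := by
    have h1 : Tendsto (fun t : ℝ => t ^ (2 * (u + α - 1))) atTop atTop :=
      tendsto_rpow_atTop hε
    have h2 := h1.const_mul_atTop hc
    simpa [sub_eq_add_neg] using tendsto_atTop_add_const_right atTop (-C) h2
  -- coercivity
  have coer : ∀ M : ℝ, ∃ S : Set (EuclideanSpace ℝ (Fin d)),
      IsCompact S ∧ ∀ x ∉ S, M < h x := by
    intro M
    obtain ⟨T, hT⟩ := (hψ.eventually_gt_atTop M).exists_forall_of_atTop
    refine ⟨Metric.closedBall 0 (max T (max a 1)),
      isCompact_closedBall 0 _, ?_⟩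
    intro x hxS
    have hxn : max T (max a 1) < ‖x‖ := by
      by_contra hle
      exact hxS (Metric.mem_closedBall.2 (by simpa [dist_zero_right] using not_lt.1 hle))
    have h1 : M < r₁ * 2 ^ (α - 1) * ‖x‖ ^ (2 * (u + α - 1)) - C :=
      hT ‖x‖ (le_of_lt (lt_of_le_of_lt (le_max_left _ _) hxn))
    have h2 := key2 x (le_of_lt (lt_of_le_of_lt (le_max_right _ _) hxn))
    linarith
  refine ⟨?_, fun M _ => coer M⟩
  -- bounded below
  have hcont : Continuous h := by
    have hhe : h = fun x => -⟪s x, x⟫ * (a ^ 2 + ‖x‖ ^ 2) ^ (α - 1)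
        - d * (a ^ 2 + ‖x‖ ^ 2) ^ (α - 1)
        + 2 * (1 - α) * ‖x‖ ^ 2 * (a ^ 2 + ‖x‖ ^ 2) ^ (α - 2) := funext hh
    rw [hhe]
    have hb : Continuous fun x : EuclideanSpace ℝ (Fin d) => a ^ 2 + ‖x‖ ^ 2 :=
      continuous_const.add (continuous_norm.pow 2)
    have hbne : ∀ x : EuclideanSpace ℝ (Fin d), a ^ 2 + ‖x‖ ^ 2 ≠ 0 := fun x => by positivity
    have hP1 : Continuous fun x : EuclideanSpace ℝ (Fin d) =>
        (a ^ 2 + ‖x‖ ^ 2) ^ (α - 1) := hb.rpow_const fun x => Or.inl (hbne x)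
    have hP2 : Continuous fun x : EuclideanSpace ℝ (Fin d) =>
        (a ^ 2 + ‖x‖ ^ 2) ^ (α - 2) := hb.rpow_const fun x => Or.inl (hbne x)
    have hinner : Continuous fun x : EuclideanSpace ℝ (Fin d) => ⟪s x, x⟫ :=
      hs_cont.inner continuous_id
    exact ((hinner.neg.mul hP1).sub (continuous_const.mul hP1)).add
      ((continuous_const.mul (continuous_norm.pow 2)).mul hP2)
  obtain ⟨S, hScomp, hS⟩ := coer 1
  rcases S.eq_empty_or_nonempty with hemp | hne
  · exact ⟨1, fun x => le_of_lt (hS x (by simp [hemp]))⟩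
  · obtain ⟨x₀, hx₀S, hmin⟩ := hScomp.exists_isMinOn hne hcont.continuousOn
    refine ⟨min (h x₀) 1, fun x => ?_⟩
    by_cases hx : x ∈ S
    · exact le_trans (min_le_left _ _) (hmin hx)
    · exact le_trans (min_le_right _ _) (le_of_lt (hS x hx))
end

section
/- Let u, v ∈ L¹(ℝ^d), let ρ : ℝ^d → [0,∞) be subadditive (ρ(x+y) ≤ ρ(x) + ρ(y) for all x, y), and let U, V : [0,∞) → [0,∞) be non-increasing functions with |u(x)| ≤ U(ρ(x)) and |v(x)| ≤ V(ρ(x)) for all x ∈ ℝ^d. Then for every α ∈ [0,1] and every x ∈ ℝ^d, ∫ |u(y) v(x−y)| dy ≤ ‖u‖_{L¹} · V(α ρ(x)) + ‖v‖_{L¹} · U((1−α) ρ(x)); in particular the convolution u⋆v satisfies |u⋆v(x)| ≤ inf_{α ∈ [0,1]} [ ‖u‖_{L¹} V(α ρ(x)) + ‖v‖_{L¹} U((1−α) ρ(x)) ]. -/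
open MeasureTheory Filter Topology

/-- **Convolution decay bound.** If `|u| ≤ U∘ρ` and `|v| ≤ V∘ρ` for a subadditive
`ρ ≥ 0` and non-increasing `U, V ≥ 0`, then for every `α ∈ [0,1]`,
`∫ |u(y) v(x−y)| dy ≤ ‖u‖₁ V(αρ(x)) + ‖v‖₁ U((1−α)ρ(x))`, and in particular the
convolution `u⋆v` satisfies the same bound in absolute value. -/
theorem convolution_decay_bound {d : ℕ}
    (u v : EuclideanSpace ℝ (Fin d) → ℝ)
    (hu : Integrable u) (hv : Integrable v)
    (ρ : EuclideanSpace ℝ (Fin d) → ℝ)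
    (hρ_nonneg : ∀ x, 0 ≤ ρ x)
    (hρ_sub : ∀ x y, ρ (x + y) ≤ ρ x + ρ y)
    (U V : ℝ → ℝ)
    (hU_anti : AntitoneOn U (Set.Ici 0)) (hV_anti : AntitoneOn V (Set.Ici 0))
    (hU_nonneg : ∀ r, 0 ≤ r → 0 ≤ U r) (hV_nonneg : ∀ r, 0 ≤ r → 0 ≤ V r)
    (hu_bd : ∀ x, |u x| ≤ U (ρ x)) (hv_bd : ∀ x, |v x| ≤ V (ρ x)) :
    ∀ α ∈ Set.Icc (0 : ℝ) 1, ∀ x : EuclideanSpace ℝ (Fin d),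
      ((∫ y, |u y * v (x - y)|) ≤
        (∫ y, |u y|) * V (α * ρ x) + (∫ y, |v y|) * U ((1 - α) * ρ x)) ∧
      (|∫ y, u y * v (x - y)| ≤
        (∫ y, |u y|) * V (α * ρ x) + (∫ y, |v y|) * U ((1 - α) * ρ x)) := by
  intro α hα x
  have hαρ : (0:ℝ) ≤ α * ρ x := mul_nonneg hα.1 (hρ_nonneg x)
  have h1αρ : (0:ℝ) ≤ (1 - α) * ρ x := mul_nonneg (by linarith [hα.2]) (hρ_nonneg x)
  set C := V (α * ρ x) with hCdef
  set D := U ((1 - α) * ρ x) with hDdef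
  have hC : 0 ≤ C := hV_nonneg _ hαρ
  have hD : 0 ≤ D := hU_nonneg _ h1αρ
  have hpt : ∀ y, |u y * v (x - y)| ≤ |u y| * C + D * |v (x - y)| := by
    intro y
    rw [abs_mul]
    by_cases h : α * ρ x ≤ ρ (x - y)
    · have hV : V (ρ (x - y)) ≤ C :=
        hV_anti (Set.mem_Ici.2 hαρ) (Set.mem_Ici.2 (hρ_nonneg _)) h
      have : |u y| * |v (x - y)| ≤ |u y| * C :=
        mul_le_mul_of_nonneg_left ((hv_bd _).trans hV) (abs_nonneg _)
      have h2 : 0 ≤ D * |v (x - y)| := mul_nonneg hD (abs_nonneg _)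
      linarith
    · push_neg at h
      have hρx : ρ x ≤ ρ y + ρ (x - y) := by
        have := hρ_sub y (x - y)
        simpa using this
      have hge : (1 - α) * ρ x ≤ ρ y := by nlinarith [hρ_nonneg x]
      have hU : U (ρ y) ≤ D :=
        hU_anti (Set.mem_Ici.2 h1αρ) (Set.mem_Ici.2 (hρ_nonneg _)) hge
      have : |u y| * |v (x - y)| ≤ D * |v (x - y)| :=
        mul_le_mul_of_nonneg_right ((hu_bd _).trans hU) (abs_nonneg _)
      have h2 : 0 ≤ |u y| * C := mul_nonneg (abs_nonneg _) hC
      linarith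
  have hvx : Integrable (fun y => v (x - y)) := hv.comp_sub_left x
  have hg : Integrable (fun y => |u y| * C + D * |v (x - y)|) :=
    ((hu.abs).mul_const C).add ((hvx.abs).const_mul D)
  have key : (∫ y, |u y * v (x - y)|) ≤
      (∫ y, |u y|) * C + (∫ y, |v y|) * D := by
    calc (∫ y, |u y * v (x - y)|)
        ≤ ∫ y, (|u y| * C + D * |v (x - y)|) := by
          refine integral_mono_of_nonneg (Filter.Eventually.of_forall fun y => abs_nonneg _)
            hg (Filter.Eventually.of_forall hpt)
      _ = (∫ y, |u y|) * C + D * (∫ y, |v (x - y)|) := by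
          rw [integral_add ((hu.abs).mul_const C) ((hvx.abs).const_mul D),
            integral_mul_const, integral_const_mul]
      _ = (∫ y, |u y|) * C + (∫ y, |v y|) * D := by
          rw [mul_comm D]
          congr 1
          congr 1
          exact integral_sub_left_eq_self (fun y => |v y|) volume x
  have habs : |∫ y, u y * v (x - y)| ≤ ∫ y, |u y * v (x - y)| := by
    rw [← Real.norm_eq_abs]
    refine (norm_integral_le_integral_norm _).trans_eq ?_
    simp [Real.norm_eq_abs, abs_mul]
  exact ⟨key, habs.trans key⟩
end
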